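/- Let M be a matroid with rank function r, and let C₁, C₂ be distinct circuits of M. Then C₁ and C₂ form a modular pair if and only if r(C₁ ∪ C₂) = |C₁ ∪ C₂| - 2. -/

import Mathlib

/-!
Let `n(X) = |X| - r(X)` be the nullity. A circuit inside `Z ⊇ Y` but not inside `Y` raises the
nullity by at least one, so the union of two distinct circuits has nullity at least `2`, and a union
of two circuits that properly contains the union of two other distinct circuits has nullity at
least `3`. Conversely, if three elements `e, f, g` of `C₁ ∪ C₂` lie outside a basis `I`, the
fundamental circuits of `e` and `f` with respect to `I` are distinct, and their union misses `g`.
So `C₁, C₂` form a modular pair exactly when `n(C₁ ∪ C₂) = 2`.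
-/

open Set

variable {α : Type*}

/-- A circuit of a matroid: a minimal dependent set. -/
def Matroid.IsCircuitDef (M : Matroid α) (C : Set α) : Prop :=
  M.Dep C ∧ ∀ D, D ⊂ C → ¬ M.Dep D

/-- The rank (in `ℕ∞`) of a set in a matroid: the supremum of the cardinalities
of independent subsets. -/
noncomputable def Matroid.rk' (M : Matroid α) (X : Set α) : ℕ∞ :=
  ⨆ I : {I : Set α // M.Indep I ∧ I ⊆ X}, (I : Set α).encard

/-- Two distinct circuits `C₁, C₂` form a modular pair if `C₁ ∪ C₂` does not
properly contain the union of two distinct circuits of `M`. -/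
def Matroid.ModularPairOfCircuits (M : Matroid α) (C₁ C₂ : Set α) : Prop :=
  C₁ ≠ C₂ ∧ ∀ D₁ D₂, M.IsCircuitDef D₁ → M.IsCircuitDef D₂ → D₁ ≠ D₂ →
    ¬ (D₁ ∪ D₂ ⊂ C₁ ∪ C₂)

namespace Matroid

variable {M : Matroid α} {C C₁ C₂ D₁ D₂ I X Y Z : Set α}

lemma isCircuitDef_iff_isCircuit : M.IsCircuitDef C ↔ M.IsCircuit C := by
  rw [isCircuit_iff_forall_ssubset]
  exact and_congr_right fun hC ↦ ⟨fun h _ hI ↦ indep_of_not_dep (h _ hI)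
    (hI.subset.trans hC.subset_ground), fun h _ hD ↦ (h hD).not_dep⟩

lemma rk'_eq_eRk (M : Matroid α) (X : Set α) : M.rk' X = M.eRk X := by
  refine le_antisymm (iSup_le fun I ↦ I.2.1.encard_le_eRk_of_subset I.2.2) ?_
  obtain ⟨I, hI⟩ := M.exists_isBasis' X
  rw [hI.eRk_eq_encard]
  exact le_iSup (fun I : {I : Set α // M.Indep I ∧ I ⊆ X} ↦ (I : Set α).encard)
    ⟨I, hI.indep, hI.subset⟩

/-- `|X| - r(X)`, defined through the dual so that no subtraction in `ℕ∞` occurs. -/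
noncomputable def nullity (M : Matroid α) (X : Set α) : ℕ∞ := (M ↾ X)✶.eRank

lemma IsBasis'.nullity_eq (hI : M.IsBasis' I X) : M.nullity X = (X \ I).encard := by
  rw [nullity, ← (isBase_restrict_iff'.2 hI).compl_isBase_dual.encard_eq_eRank,
    restrict_ground_eq]

lemma eRk_add_nullity (M : Matroid α) (X : Set α) : M.eRk X + M.nullity X = X.encard := by
  obtain ⟨I, hI⟩ := M.exists_isBasis' X
  rw [hI.nullity_eq, ← hI.encard_eq_eRk, add_comm, encard_sdiff_add_encard_of_subset hI.subset]

lemma nullity_empty (M : Matroid α) : M.nullity ∅ = 0 := by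
  simpa using M.eRk_add_nullity ∅

lemma eRk_eq_encard_sub_iff (hX : X.Finite) {k : ℕ∞} (hk : k ≤ M.nullity X) :
    M.eRk X = X.encard - k ↔ M.nullity X = k := by
  have hr : M.eRk X ≠ ⊤ := ((M.eRk_le_encard X).trans_lt hX.encard_lt_top).ne
  have hn : M.nullity X ≠ ⊤ :=
    (le_add_self.trans_lt ((M.eRk_add_nullity X).symm ▸ hX.encard_lt_top)).ne
  rw [← M.eRk_add_nullity X]
  lift M.eRk X to ℕ using hr with r
  lift M.nullity X to ℕ using hn with n
  lift k to ℕ using ne_top_of_le_ne_top (ENat.natCast_ne_top n) hk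
  norm_cast at hk ⊢
  omega

lemma nullity_add_one_le (hYZ : Y ⊆ Z) (hC : M.IsCircuit C) (hCZ : C ⊆ Z) (hCY : ¬ C ⊆ Y) :
    M.nullity Y + 1 ≤ M.nullity Z := by
  -- A basis of `Y` through `C ∩ Y` extends to a basis of `Z` that misses a point of `C \ Y`.
  have hCY_indep : M.Indep (C ∩ Y) := hC.ssubset_indep
    (inter_subset_left.ssubset_of_ne fun h ↦ hCY (h ▸ inter_subset_right))
  obtain ⟨J, hJ, hCJ⟩ := hCY_indep.subset_isBasis'_of_subset inter_subset_right
  obtain ⟨I, hI, hJI⟩ := hJ.indep.subset_isBasis'_of_subset (hJ.subset.trans hYZ)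
  obtain ⟨e, heC, heI⟩ := not_subset.1 fun h ↦ hC.not_indep (hI.indep.subset h)
  have heY : e ∉ Y := fun heY ↦ heI (hJI (hCJ ⟨heC, heY⟩))
  have hIY : I ∩ Y = J := (hJ.eq_of_subset_indep (hI.indep.inter_right Y)
    (subset_inter hJI hJ.subset) inter_subset_right).symm
  have hsub : insert e (Y \ J) ⊆ Z \ I := insert_subset ⟨hCZ heC, heI⟩
    fun x hx ↦ ⟨hYZ hx.1, fun hxI ↦ hx.2 (hIY ▸ ⟨hxI, hx.1⟩)⟩
  rw [hJ.nullity_eq, hI.nullity_eq, ← encard_insert_of_notMem fun h ↦ heY h.1]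
  exact encard_le_encard hsub

lemma IsCircuit.one_le_nullity (hC : M.IsCircuit C) : 1 ≤ M.nullity C := by
  simpa [nullity_empty] using
    nullity_add_one_le (empty_subset C) hC subset_rfl (by simpa using hC.nonempty.ne_empty)

lemma IsCircuit.two_le_nullity_union (h₁ : M.IsCircuit C₁) (h₂ : M.IsCircuit C₂)
    (hne : C₁ ≠ C₂) : 2 ≤ M.nullity (C₁ ∪ C₂) :=
  calc 2 = 1 + 1 := one_add_one_eq_two.symm
    _ ≤ M.nullity C₁ + 1 := by gcongr; exact h₁.one_le_nullity
    _ ≤ M.nullity (C₁ ∪ C₂) := nullity_add_one_le subset_union_left h₂ subset_union_right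
      fun h ↦ hne (h₂.eq_of_subset_isCircuit h₁ h).symm

lemma three_le_nullity_of_union_ssubset (h₁ : M.IsCircuit C₁) (h₂ : M.IsCircuit C₂)
    (hD₁ : M.IsCircuit D₁) (hD₂ : M.IsCircuit D₂) (hDne : D₁ ≠ D₂)
    (hss : D₁ ∪ D₂ ⊂ C₁ ∪ C₂) : 3 ≤ M.nullity (C₁ ∪ C₂) := by
  obtain ⟨C, hC, hCX, hCY⟩ : ∃ C, M.IsCircuit C ∧ C ⊆ C₁ ∪ C₂ ∧ ¬ C ⊆ D₁ ∪ D₂ := by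
    obtain ⟨x, hx | hx, hxY⟩ := exists_of_ssubset hss
    · exact ⟨C₁, h₁, subset_union_left, fun h ↦ hxY (h hx)⟩
    · exact ⟨C₂, h₂, subset_union_right, fun h ↦ hxY (h hx)⟩
  calc 3 = 2 + 1 := by norm_num
    _ ≤ M.nullity (D₁ ∪ D₂) + 1 := by gcongr; exact hD₁.two_le_nullity_union hD₂ hDne
    _ ≤ M.nullity (C₁ ∪ C₂) := nullity_add_one_le hss.subset hC hCX hCY

lemma exists_isCircuit_pair_of_three_le_nullity (hX : X ⊆ M.E) (h : 3 ≤ M.nullity X) :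
    ∃ D₁ D₂, M.IsCircuit D₁ ∧ M.IsCircuit D₂ ∧ D₁ ≠ D₂ ∧ D₁ ∪ D₂ ⊂ X := by
  obtain ⟨I, hI⟩ := M.exists_isBasis X
  rw [hI.isBasis'.nullity_eq] at h
  obtain ⟨t, hts, ht⟩ := exists_subset_encard_eq h
  obtain ⟨e, f, g, hef, heg, hfg, rfl⟩ := encard_eq_three.1 ht
  have he : e ∈ X \ I := hts (by simp)
  have hf : f ∈ X \ I := hts (by simp)
  have hg : g ∈ X \ I := hts (by simp)
  have hfund {x} (hx : x ∈ X \ I) : M.IsCircuit (M.fundCircuit x I) :=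
    hI.indep.fundCircuit_isCircuit (hI.subset_closure hx.1) hx.2
  have hsub : M.fundCircuit e I ∪ M.fundCircuit f I ⊆ insert e (insert f I) :=
    union_subset
      ((M.fundCircuit_subset_insert e I).trans (insert_subset_insert (subset_insert f I)))
      ((M.fundCircuit_subset_insert f I).trans (subset_insert e _))
  refine ⟨_, _, hfund he, hfund hf, fun h ↦ ?_, hsub.trans_ssubset ?_⟩
  · obtain hfe | hfI := M.fundCircuit_subset_insert e I (h ▸ M.mem_fundCircuit f I)
    exacts [hef hfe.symm, hf.2 hfI]
  · refine (ssubset_iff_of_subset (insert_subset he.1 (insert_subset hf.1 hI.subset))).2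
      ⟨g, hg.1, ?_⟩
    rintro (hge | hgf | hgI)
    exacts [heg hge.symm, hfg hgf.symm, hg.2 hgI]

end Matroid

/-- Distinct circuits `C₁, C₂` of a matroid form a modular pair iff
`r(C₁ ∪ C₂) = |C₁ ∪ C₂| - 2`. -/
theorem modularPair_iff_rank_card (M : Matroid α) (hE : M.E.Finite) (C₁ C₂ : Set α)
    (h₁ : M.IsCircuitDef C₁) (h₂ : M.IsCircuitDef C₂) (hne : C₁ ≠ C₂) :
    M.ModularPairOfCircuits C₁ C₂ ↔
      M.rk' (C₁ ∪ C₂) = (C₁ ∪ C₂).encard - 2 := by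
  rw [Matroid.isCircuitDef_iff_isCircuit] at h₁ h₂
  have hXE : C₁ ∪ C₂ ⊆ M.E := union_subset h₁.subset_ground h₂.subset_ground
  have h2 := h₁.two_le_nullity_union h₂ hne
  simp only [Matroid.ModularPairOfCircuits, Matroid.isCircuitDef_iff_isCircuit,
    Matroid.rk'_eq_eRk, Matroid.eRk_eq_encard_sub_iff (hE.subset hXE) h2, ne_eq, hne,
    not_false_eq_true, true_and]
  constructor
  · intro hmod
    by_contra hn
    obtain ⟨D₁, D₂, hD₁, hD₂, hDne, hss⟩ := Matroid.exists_isCircuit_pair_of_three_le_nullity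
      hXE (Order.add_one_le_of_lt (h2.lt_of_ne' hn))
    exact hmod D₁ D₂ hD₁ hD₂ hDne hss
  · intro hn D₁ D₂ hD₁ hD₂ hDne hss
    have h3 := Matroid.three_le_nullity_of_union_ssubset h₁ h₂ hD₁ hD₂ hDne hss
    rw [hn] at h3
    norm_num at h3
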